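/- Define F : [0,1] → ℝ piecewise linearly by F(0) = F(1/5) = 0, F(3/5) = 1, F(1) = 3 (linear on [0,1/5], [1/5,3/5], [3/5,1]). Then F is convex, yet for y = 2/5, z = 1/4, x = 1 − y − z, γ = y² + 2yz = 9/25, and η = 1 − √(1−γ) = 1/5, one has x·F(0) + y·F(y+z) + z·F(y) = 5/8 > 3/5 = max((1−√γ)F(0) + √γ F(√γ), (1−η)F(η) + η F(1)). -/
import Mathlib


noncomputable def F : ℝ → ℝ := fun x =>
  if x ≤ 1 / 5 then 0 else if x ≤ 3 / 5 then (5 * x - 1) / 2 else 5 * x - 2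

lemma F_eq_max : F = fun x => max (max 0 ((5 * x - 1) / 2)) (5 * x - 2) := by
  funext x
  unfold F
  split_ifs with h1 h2
  · rw [sup_eq_left.mpr (by linarith : (5 * x - 1) / 2 ≤ 0),
      sup_eq_left.mpr (by linarith : 5 * x - 2 ≤ 0)]
  · push_neg at h1
    rw [sup_eq_right.mpr (by linarith : (0:ℝ) ≤ (5 * x - 1) / 2),
      sup_eq_left.mpr (by linarith : 5 * x - 2 ≤ (5 * x - 1) / 2)]
  · push_neg at h1 h2
    rw [sup_eq_right.mpr (sup_le (by linarith) (by linarith))]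

lemma affine_convex (a b : ℝ) : ConvexOn ℝ (Set.Icc (0 : ℝ) 1) (fun x => a * x + b) := by
  refine ⟨convex_Icc _ _, ?_⟩
  intro x _ y _ p q _ _ hpq
  simp only [smul_eq_mul]
  apply le_of_eq
  linear_combination (-b) * hpq

lemma sqrt_frac : Real.sqrt (9 / 25) = 3 / 5 := by
  rw [show (9 / 25 : ℝ) = (3 / 5) ^ 2 by norm_num, Real.sqrt_sq (by norm_num)]

lemma sqrt_frac' : Real.sqrt (16 / 25) = 4 / 5 := by
  rw [show (16 / 25 : ℝ) = (4 / 5) ^ 2 by norm_num, Real.sqrt_sq (by norm_num)]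

theorem stmt_16 :
    ConvexOn ℝ (Set.Icc (0 : ℝ) 1) F ∧
    F 0 = 0 ∧ F (1 / 5) = 0 ∧ F (3 / 5) = 1 ∧ F 1 = 3 ∧
    (let y : ℝ := 2 / 5
     let z : ℝ := 1 / 4
     let x : ℝ := 1 - y - z
     let γ : ℝ := y ^ 2 + 2 * y * z
     let η : ℝ := 1 - Real.sqrt (1 - γ)
     γ = 9 / 25 ∧ η = 1 / 5 ∧
     x * F 0 + y * F (y + z) + z * F y = 5 / 8 ∧
     max ((1 - Real.sqrt γ) * F 0 + Real.sqrt γ * F (Real.sqrt γ))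
         ((1 - η) * F η + η * F 1) = 3 / 5 ∧
     (3 / 5 : ℝ) < 5 / 8) := by
  have hs16 : Real.sqrt (1 - ((2/5:ℝ) ^ 2 + 2 * (2/5) * (1/4))) = 4 / 5 := by
    rw [show (1 - ((2/5:ℝ) ^ 2 + 2 * (2/5) * (1/4))) = 16 / 25 by norm_num, sqrt_frac']
  have hs9 : Real.sqrt ((2/5:ℝ) ^ 2 + 2 * (2/5) * (1/4)) = 3 / 5 := by
    rw [show ((2/5:ℝ) ^ 2 + 2 * (2/5) * (1/4)) = 9 / 25 by norm_num, sqrt_frac]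
  refine ⟨?_, ?_, ?_, ?_, ?_, ?_⟩
  · rw [F_eq_max]
    have h1 : ConvexOn ℝ (Set.Icc (0 : ℝ) 1) (fun x : ℝ => (0 : ℝ)) := by
      simpa using affine_convex 0 0
    have h2 : ConvexOn ℝ (Set.Icc (0 : ℝ) 1) (fun x : ℝ => (5 * x - 1) / 2) := by
      have h := affine_convex (5 / 2) (-1 / 2)
      simpa [show (fun x : ℝ => 5 / 2 * x + -1 / 2) = fun x : ℝ => (5 * x - 1) / 2 by
        funext x; ring] using h
    have h3 : ConvexOn ℝ (Set.Icc (0 : ℝ) 1) (fun x : ℝ => 5 * x - 2) := by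
      have h := affine_convex 5 (-2)
      simpa [show (fun x : ℝ => 5 * x + -2) = fun x : ℝ => 5 * x - 2 by
        funext x; ring] using h
    exact (h1.sup h2).sup h3
  · norm_num [F]
  · norm_num [F]
  · norm_num [F]
  · norm_num [F]
  · refine ⟨by norm_num, ?_, ?_, ?_, by norm_num⟩
    · show (1 : ℝ) - Real.sqrt (1 - ((2/5:ℝ) ^ 2 + 2 * (2/5) * (1/4))) = 1 / 5
      rw [hs16]; norm_num
    · norm_num [F]
    · show max ((1 - Real.sqrt ((2/5:ℝ) ^ 2 + 2 * (2/5) * (1/4))) * F 0 +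
          Real.sqrt ((2/5:ℝ) ^ 2 + 2 * (2/5) * (1/4)) *
            F (Real.sqrt ((2/5:ℝ) ^ 2 + 2 * (2/5) * (1/4))))
          ((1 - (1 - Real.sqrt (1 - ((2/5:ℝ) ^ 2 + 2 * (2/5) * (1/4))))) *
            F (1 - Real.sqrt (1 - ((2/5:ℝ) ^ 2 + 2 * (2/5) * (1/4)))) +
            (1 - Real.sqrt (1 - ((2/5:ℝ) ^ 2 + 2 * (2/5) * (1/4)))) * F 1) = 3 / 5
      rw [hs16, hs9]
      norm_num [F]
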